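/- Let {ε_t} be an i.i.d. sequence with sup_t ‖ε_t‖_{L^r} < ∞ for some r ≥ 2, and let Z_t = G(Z_{t−1}, ε_t) with G contractive with constants 0 ≤ C_Z < 1 and 0 ≤ C_ε < ∞. If Z'_t is an independent copy of Z_t and Z_{t+h} shares the innovations ε_{t+1:t+h} with G^{(h)}(Z'_t, ε_{t+1:t+h}), then ‖Z_{t+h} − G^{(h)}(Z'_t, ε_{t+1:t+h})‖_{L^r} ≤ 2 ‖Z_t‖_{L^r} exp(−γ h) with γ = −log(C_Z). In particular the process is geometric moment contracting. -/

import Mathlib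

/-!
Contractivity in the state variable, applied along the shared innovations, gives
`‖G⁽ʰ⁾(z, e) - G⁽ʰ⁾(z', e)‖ ≤ C_Zʰ ‖z - z'‖` pointwise. Taking `L^r` norms and using the triangle
inequality, `‖Z_t - Z'_t‖_{L^r} ≤ ‖Z_t‖_{L^r} + ‖Z'_t‖_{L^r} = 2 ‖Z_t‖_{L^r}` because `Z'_t` has the
law of `Z_t`; finally `C_Zʰ ≤ exp (h log C_Z)`, with equality when `C_Z > 0`.
-/

open MeasureTheory ProbabilityTheory

variable {dZ : ℕ}

def sysIter (G : EuclideanSpace ℝ (Fin dZ) → EuclideanSpace ℝ (Fin dZ) → EuclideanSpace ℝ (Fin dZ))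
    (z : EuclideanSpace ℝ (Fin dZ)) :
    (h : ℕ) → (Fin h → EuclideanSpace ℝ (Fin dZ)) → EuclideanSpace ℝ (Fin dZ)
  | 0, _ => z
  | h + 1, e => G (sysIter G z h (fun i => e i.castSucc)) (e (Fin.last h))

section sysIter

variable {Z E : Set (EuclideanSpace ℝ (Fin dZ))}
  {G : EuclideanSpace ℝ (Fin dZ) → EuclideanSpace ℝ (Fin dZ) → EuclideanSpace ℝ (Fin dZ)}

lemma sysIter_mem (hGZ : ∀ z ∈ Z, ∀ e ∈ E, G z e ∈ Z) {z : EuclideanSpace ℝ (Fin dZ)} (hz : z ∈ Z) :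
    ∀ {h : ℕ} {e : Fin h → EuclideanSpace ℝ (Fin dZ)}, (∀ i, e i ∈ E) → sysIter G z h e ∈ Z
  | 0, _, _ => hz
  | _ + 1, _, he => hGZ _ (sysIter_mem hGZ hz fun _ => he _) _ (he _)

lemma norm_sysIter_sub_le (hGZ : ∀ z ∈ Z, ∀ e ∈ E, G z e ∈ Z) {CZ : ℝ} (hCZ : 0 ≤ CZ)
    (hG : ∀ z ∈ Z, ∀ z' ∈ Z, ∀ e ∈ E, ‖G z e - G z' e‖ ≤ CZ * ‖z - z'‖)
    {z z' : EuclideanSpace ℝ (Fin dZ)} (hz : z ∈ Z) (hz' : z' ∈ Z) :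
    ∀ {h : ℕ} {e : Fin h → EuclideanSpace ℝ (Fin dZ)}, (∀ i, e i ∈ E) →
      ‖sysIter G z h e - sysIter G z' h e‖ ≤ CZ ^ h * ‖z - z'‖
  | 0, _, _ => by simp [sysIter]
  | n + 1, e, he =>
    calc ‖sysIter G z (n + 1) e - sysIter G z' (n + 1) e‖
        ≤ CZ * ‖sysIter G z n (fun i => e i.castSucc) - sysIter G z' n (fun i => e i.castSucc)‖ :=
          hG _ (sysIter_mem hGZ hz fun _ => he _) _ (sysIter_mem hGZ hz' fun _ => he _) _ (he _)
      _ ≤ CZ * (CZ ^ n * ‖z - z'‖) := by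
          gcongr; exact norm_sysIter_sub_le hGZ hCZ hG hz hz' fun _ => he _
      _ = CZ ^ (n + 1) * ‖z - z'‖ := by ring

end sysIter

lemma eLpNorm_sub_le_two_mul_of_identDistrib {Ω F : Type*} [MeasurableSpace Ω] {μ : Measure Ω}
    [NormedAddCommGroup F] [MeasurableSpace F] [BorelSpace F] [SecondCountableTopology F]
    {X Y : Ω → F} (hXY : IdentDistrib X Y μ μ) {p : ENNReal} (hp : 1 ≤ p) :
    eLpNorm (X - Y) p μ ≤ 2 * eLpNorm X p μ :=
  calc eLpNorm (X - Y) p μ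
      ≤ eLpNorm X p μ + eLpNorm Y p μ :=
        eLpNorm_sub_le hXY.aemeasurable_fst.aestronglyMeasurable
          hXY.aemeasurable_snd.aestronglyMeasurable hp
    _ = 2 * eLpNorm X p μ := by rw [← hXY.eLpNorm_eq, two_mul]

lemma Real.pow_le_exp_log_mul (x : ℝ) (n : ℕ) : x ^ n ≤ Real.exp (Real.log x * n) :=
  calc x ^ n ≤ |x ^ (n : ℝ)| := by rw [Real.rpow_natCast]; exact le_abs_self _
    _ ≤ Real.exp (Real.log x * n) := Real.abs_rpow_le_exp_log_mul x n

theorem gmc_of_contractive_general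
    {Ω : Type*} [MeasurableSpace Ω] (μ : Measure Ω)
    (Z E : Set (EuclideanSpace ℝ (Fin dZ)))
    (G : EuclideanSpace ℝ (Fin dZ) → EuclideanSpace ℝ (Fin dZ) → EuclideanSpace ℝ (Fin dZ))
    (hGZ : ∀ z ∈ Z, ∀ e ∈ E, G z e ∈ Z)
    (CZ Cε : ℝ) (hCZ0 : 0 ≤ CZ)
    (hContr : ∀ z ∈ Z, ∀ z' ∈ Z, ∀ e ∈ E, ∀ e' ∈ E,
      ‖G z e - G z' e'‖ ≤ CZ * ‖z - z'‖ + Cε * ‖e - e'‖)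
    (r : ℝ) (hr : 2 ≤ r)
    (h : ℕ)
    (Zt Z't : Ω → EuclideanSpace ℝ (Fin dZ))
    (ε : Fin h → Ω → EuclideanSpace ℝ (Fin dZ))
    -- measurability and support conditions
    (hZtsupp : ∀ᵐ ω ∂μ, Zt ω ∈ Z) (hZ'tsupp : ∀ᵐ ω ∂μ, Z't ω ∈ Z)
    (hεsupp : ∀ i, ∀ᵐ ω ∂μ, ε i ω ∈ E)
    -- `Z'_t` is an independent copy of `Z_t`
    (hcopy : IdentDistrib Zt Z't μ μ) :
    eLpNorm (fun ω => sysIter G (Zt ω) h (fun i => ε i ω)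
        - sysIter G (Z't ω) h (fun i => ε i ω)) (ENNReal.ofReal r) μ
      ≤ ENNReal.ofReal (2 * Real.exp (-(-Real.log CZ) * h)) *
          eLpNorm Zt (ENNReal.ofReal r) μ := by
  have hp : 1 ≤ ENNReal.ofReal r := ENNReal.one_le_ofReal.mpr (by linarith)
  have hstep : ∀ᵐ ω ∂μ, ‖sysIter G (Zt ω) h (fun i => ε i ω) - sysIter G (Z't ω) h (fun i => ε i ω)‖
      ≤ CZ ^ h * ‖Zt ω - Z't ω‖ := by
    filter_upwards [hZtsupp, hZ'tsupp, ae_all_iff.mpr hεsupp] with ω hz hz' he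
    refine norm_sysIter_sub_le hGZ hCZ0 (fun z hz z' hz' e he => ?_) hz hz' he
    simpa using hContr z hz z' hz' e he e he
  calc _ ≤ ENNReal.ofReal (CZ ^ h) * eLpNorm (Zt - Z't) (ENNReal.ofReal r) μ :=
        eLpNorm_le_mul_eLpNorm_of_ae_le_mul hstep _
    _ ≤ ENNReal.ofReal (CZ ^ h) * (2 * eLpNorm Zt (ENNReal.ofReal r) μ) := by
        gcongr; exact eLpNorm_sub_le_two_mul_of_identDistrib hcopy hp
    _ ≤ ENNReal.ofReal (2 * Real.exp (-(-Real.log CZ) * h)) * eLpNorm Zt (ENNReal.ofReal r) μ := by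
        rw [neg_neg, ENNReal.ofReal_mul zero_le_two, ENNReal.ofReal_ofNat, mul_left_comm,
          ← mul_assoc]
        gcongr
        exact Real.pow_le_exp_log_mul CZ h

/-- Geometric moment contraction for contractive systems: if `G` is contractive with
constants `0 ≤ C_Z < 1`, `0 ≤ C_ε < ∞`, the innovations `ε` are i.i.d. with finite `L^r`
moments (`r ≥ 2`), `Z'_t` is an independent copy of `Z_t` (in particular identically
distributed), and `Z_{t+h} = G^{(h)}(Z_t, ε_{t+1:t+h})` shares the innovations with
`G^{(h)}(Z'_t, ε_{t+1:t+h})`, then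
`‖Z_{t+h} − G^{(h)}(Z'_t, ε_{t+1:t+h})‖_{L^r} ≤ 2 ‖Z_t‖_{L^r} exp(−γ h)` with `γ = −log C_Z`. -/
theorem gmc_of_contractive
    {Ω : Type*} [MeasurableSpace Ω] (μ : Measure Ω) [IsProbabilityMeasure μ]
    (Z E : Set (EuclideanSpace ℝ (Fin dZ)))
    (G : EuclideanSpace ℝ (Fin dZ) → EuclideanSpace ℝ (Fin dZ) → EuclideanSpace ℝ (Fin dZ))
    (hGZ : ∀ z ∈ Z, ∀ e ∈ E, G z e ∈ Z)
    (CZ Cε : ℝ) (hCZ0 : 0 ≤ CZ) (hCZ1 : CZ < 1) (hCε : 0 ≤ Cε)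
    (hContr : ∀ z ∈ Z, ∀ z' ∈ Z, ∀ e ∈ E, ∀ e' ∈ E,
      ‖G z e - G z' e'‖ ≤ CZ * ‖z - z'‖ + Cε * ‖e - e'‖)
    (r : ℝ) (hr : 2 ≤ r)
    (h : ℕ)
    (Zt Z't : Ω → EuclideanSpace ℝ (Fin dZ))
    (ε : Fin h → Ω → EuclideanSpace ℝ (Fin dZ))
    -- measurability and support conditions
    (hZtmeas : AEMeasurable Zt μ) (hZ'tmeas : AEMeasurable Z't μ)
    (hεmeas : ∀ i, AEMeasurable (ε i) μ)
    (hZtsupp : ∀ᵐ ω ∂μ, Zt ω ∈ Z) (hZ'tsupp : ∀ᵐ ω ∂μ, Z't ω ∈ Z)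
    (hεsupp : ∀ i, ∀ᵐ ω ∂μ, ε i ω ∈ E)
    -- the innovations are i.i.d. with finite `L^r` moments
    (hiid : ∀ i j, IdentDistrib (ε i) (ε j) μ μ)
    (hindep : iIndepFun ε μ)
    (hεLr : ∀ i, eLpNorm (ε i) (ENNReal.ofReal r) μ < ⊤)
    -- `Z'_t` is an independent copy of `Z_t`
    (hcopy : IdentDistrib Zt Z't μ μ)
    (hindepcopy : IndepFun Zt Z't μ)
    (hZtLr : eLpNorm Zt (ENNReal.ofReal r) μ < ⊤) :
    eLpNorm (fun ω => sysIter G (Zt ω) h (fun i => ε i ω)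
        - sysIter G (Z't ω) h (fun i => ε i ω)) (ENNReal.ofReal r) μ
      ≤ ENNReal.ofReal (2 * Real.exp (-(-Real.log CZ) * h)) *
          eLpNorm Zt (ENNReal.ofReal r) μ :=
  gmc_of_contractive_general μ Z E G hGZ CZ Cε hCZ0 hContr r hr h Zt Z't ε hZtsupp hZ'tsupp hεsupp
    hcopy
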